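/- arXiv:1809.05631 — 4 statements merged into one kernel-verified Lean document; each statement's English description precedes it below -/
import Mathlib

section
/- Let X₁, …, X_n be independent and identically distributed real-valued random variables on a probability space, and set S_k = X₁ + ⋯ + X_k. Let A be the event {S_k ≥ 0 for all 1 ≤ k ≤ n} and B the event {S_n ≥ 0}. Then P(B)/n ≤ P(A) ≤ P(B). -/
/-!
By the cycle lemma, whenever `S_n ≥ 0` some cyclic rotation `(X_{j+1}, …, X_n, X_1, …, X_j)` has
all its partial sums nonnegative. An i.i.d. vector has the same joint law as each of its
rotations, so a union bound over the `n` rotations gives `P(B) ≤ n P(A)`; and `A ⊆ B`.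
-/

open Finset MeasureTheory ProbabilityTheory

section

open Fin.NatCast

variable {α : Type*} [AddCommMonoid α] {n : ℕ}

lemma Function.Periodic.sum_range_add_period {F : ℕ → α} (hF : Function.Periodic F n) (m : ℕ) :
    ∑ i ∈ range (n + m), F i = ∑ i ∈ range n, F i + ∑ i ∈ range m, F i := by
  rw [sum_range_add]
  congr 1
  exact sum_congr rfl fun i _ => by rw [add_comm, hF i]

lemma Fin.sum_filter_val_lt_eq_sum_range [NeZero n] (f : Fin n → α) {k : ℕ} (hk : k ≤ n) :
    ∑ i ∈ univ.filter (fun i : Fin n => (i : ℕ) < k), f i = ∑ m ∈ range k, f (m : Fin n) := by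
  have hmap : (univ.filter (fun i : Fin n => (i : ℕ) < k)).map Fin.valEmbedding = range k := by
    ext m
    simp only [mem_map, mem_filter, mem_univ, true_and, Fin.valEmbedding_apply, mem_range]
    exact ⟨fun ⟨i, hi, him⟩ => him ▸ hi, fun hm => ⟨⟨m, hm.trans_le hk⟩, hm, rfl⟩⟩
  rw [← hmap, sum_map]
  simp only [Fin.valEmbedding_apply, Fin.cast_val_eq_self]

variable [LinearOrder α] [IsOrderedCancelAddMonoid α]

lemma Function.Periodic.sum_range_mod_le {F : ℕ → α} (hF : Function.Periodic F n)
    (hn : 0 ≤ ∑ i ∈ range n, F i) (m : ℕ) :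
    ∑ i ∈ range (m % n), F i ≤ ∑ i ∈ range m, F i := by
  suffices ∀ q r, ∑ i ∈ range r, F i ≤ ∑ i ∈ range (n * q + r), F i by
    simpa only [Nat.div_add_mod] using this (m / n) (m % n)
  intro q r
  induction q with
  | zero => simp
  | succ q ih =>
    rw [Nat.mul_succ, add_right_comm, add_comm (n * q + r), hF.sum_range_add_period]
    exact ih.trans (le_add_of_nonneg_left hn)

/-- The cycle lemma: the rotation starting at a minimum of the partial sums has all its partial
sums nonnegative. -/
lemma Function.Periodic.exists_forall_sum_range_add_nonneg {F : ℕ → α}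
    (hF : Function.Periodic F n) (hn_pos : 0 < n) (hn : 0 ≤ ∑ i ∈ range n, F i) :
    ∃ j < n, ∀ k, 0 ≤ ∑ i ∈ range k, F (j + i) := by
  obtain ⟨j, hj, hmin⟩ := exists_min_image (range n) (fun m => ∑ i ∈ range m, F i)
    ⟨0, mem_range.2 hn_pos⟩
  refine ⟨j, mem_range.1 hj, fun k => ?_⟩
  have hle : ∑ i ∈ range j, F i ≤ ∑ i ∈ range (j + k), F i :=
    (hmin _ (mem_range.2 (Nat.mod_lt _ hn_pos))).trans (hF.sum_range_mod_le hn _)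
  rwa [sum_range_add, le_add_iff_nonneg_right] at hle

lemma Fin.exists_forall_sum_filter_val_lt_add_nonneg [NeZero n] (f : Fin n → α)
    (hf : 0 ≤ ∑ i, f i) :
    ∃ j : Fin n, ∀ k ≤ n, 0 ≤ ∑ i ∈ univ.filter (fun i : Fin n => (i : ℕ) < k), f (i + j) := by
  have hF : Function.Periodic (fun m : ℕ => f (m : Fin n)) n := fun m => by simp
  have hsum : 0 ≤ ∑ m ∈ range n, f (m : Fin n) := by
    simpa [← Fin.sum_univ_eq_sum_range, Fin.cast_val_eq_self] using hf
  obtain ⟨j, -, hj⟩ := hF.exists_forall_sum_range_add_nonneg (Nat.pos_of_neZero n) hsum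
  refine ⟨(j : Fin n), fun k hk => ?_⟩
  rw [Fin.sum_filter_val_lt_eq_sum_range _ hk]
  simpa [add_comm] using hj k

end

lemma ProbabilityTheory.iIndepFun.map_fun_comp_eq {Ω ι β : Type*} [MeasurableSpace Ω]
    [MeasurableSpace β] [Fintype ι] {μ : Measure Ω} {X : ι → Ω → β}
    (hX : ∀ i, AEMeasurable (X i) μ) (hindep : iIndepFun X μ)
    (hident : ∀ i j, μ.map (X i) = μ.map (X j)) {g : ι → ι} (hg : g.Injective) :
    μ.map (fun ω i => X (g i) ω) = μ.map (fun ω i => X i ω) := by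
  rw [(hindep.precomp hg).map_fun_eq_pi_map fun i => hX (g i), hindep.map_fun_eq_pi_map hX]
  exact congrArg Measure.pi (funext fun i => hident (g i) i)

theorem prob_all_partial_sums_nonneg_general (n : ℕ) (hn : 1 ≤ n)
    (Ω : Type) [MeasurableSpace Ω] (μ : Measure Ω)
    (X : Fin n → Ω → ℝ) (hmeas : ∀ i, Measurable (X i))
    (hindep : iIndepFun X μ)
    (hident : ∀ i j, Measure.map (X i) μ = Measure.map (X j) μ) :
    μ {ω | 0 ≤ ∑ i, X i ω} / n ≤
        μ {ω | ∀ k, 1 ≤ k → k ≤ n →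
          0 ≤ ∑ i ∈ Finset.univ.filter (fun i : Fin n => (i : ℕ) < k), X i ω} ∧
      μ {ω | ∀ k, 1 ≤ k → k ≤ n →
          0 ≤ ∑ i ∈ Finset.univ.filter (fun i : Fin n => (i : ℕ) < k), X i ω} ≤
        μ {ω | 0 ≤ ∑ i, X i ω} := by
  have : NeZero n := ⟨by omega⟩
  set A : Set (Fin n → ℝ) := {x | ∀ k, 1 ≤ k → k ≤ n →
    0 ≤ ∑ i ∈ univ.filter (fun i : Fin n => (i : ℕ) < k), x i}
  have hA : MeasurableSet A := by
    simp only [A, Set.ofPred_forall]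
    exact .iInter fun k => .iInter fun _ => .iInter fun _ =>
      measurableSet_le measurable_const (by fun_prop)
  have hrotate (j : Fin n) :
      μ ((fun ω i => X (i + j) ω) ⁻¹' A) = μ ((fun ω i => X i ω) ⁻¹' A) := by
    rw [← Measure.map_apply (by fun_prop) hA, ← Measure.map_apply (by fun_prop) hA,
      hindep.map_fun_comp_eq (fun i => (hmeas i).aemeasurable) hident (add_left_injective j)]
  refine ⟨ENNReal.div_le_of_le_mul ?_, measure_mono fun ω hω => by simpa using hω n hn le_rfl⟩
  calc μ {ω | 0 ≤ ∑ i, X i ω}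
      ≤ μ (⋃ j : Fin n, (fun ω i => X (i + j) ω) ⁻¹' A) := measure_mono fun ω hω => by
        obtain ⟨j, hj⟩ := Fin.exists_forall_sum_filter_val_lt_add_nonneg (fun i => X i ω) hω
        exact Set.mem_iUnion.2 ⟨j, fun k _ hk => hj k hk⟩
    _ ≤ ∑ j : Fin n, μ ((fun ω i => X (i + j) ω) ⁻¹' A) := measure_iUnion_fintype_le _ _
    _ = μ ((fun ω i => X i ω) ⁻¹' A) * n := by simp [hrotate, mul_comm]

/-- For i.i.d. real random variables `X₁, …, X_n` with partial sums `S_k`, the events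
`A = {S_k ≥ 0 for all 1 ≤ k ≤ n}` and `B = {S_n ≥ 0}` satisfy
`P(B)/n ≤ P(A) ≤ P(B)`. -/
theorem prob_all_partial_sums_nonneg (n : ℕ) (hn : 1 ≤ n)
    (Ω : Type) [MeasurableSpace Ω] (μ : Measure Ω) [IsProbabilityMeasure μ]
    (X : Fin n → Ω → ℝ) (hmeas : ∀ i, Measurable (X i))
    (hindep : iIndepFun X μ)
    (hident : ∀ i j, Measure.map (X i) μ = Measure.map (X j) μ) :
    μ {ω | 0 ≤ ∑ i, X i ω} / n ≤
        μ {ω | ∀ k, 1 ≤ k → k ≤ n →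
          0 ≤ ∑ i ∈ Finset.univ.filter (fun i : Fin n => (i : ℕ) < k), X i ω} ∧
      μ {ω | ∀ k, 1 ≤ k → k ≤ n →
          0 ≤ ∑ i ∈ Finset.univ.filter (fun i : Fin n => (i : ℕ) < k), X i ω} ≤
        μ {ω | 0 ≤ ∑ i, X i ω} :=
  prob_all_partial_sums_nonneg_general n hn Ω μ X hmeas hindep hident
end

section
/- Let q ≥ 0 and b be integers, and for each k ∈ ℕ and z ∈ ℤ let F_{k,z} and G_{k,z} be probability distributions on the nonnegative integers. Let (S_k)_{k≥0} and (T_k)_{k≥0} be the time-inhomogeneous Markov chains with S₀ = T₀ = b, S_{k+1} = S_k + X_k − q where, conditionally on S₀,…,S_k, the increment X_k has law F_{k,S_k}, and T_{k+1} = T_k + Y_k − q where, conditionally on T₀,…,T_k, the increment Y_k has law G_{k,T_k}. Assume: (1) for all k ∈ ℕ, z ∈ ℤ and l ∈ ℝ, G_{k,z}((−∞,l]) ≤ G_{k,z−1}((−∞,l+1]); (2) there exists an integer M ≥ b such that for every k ∈ ℕ and every integer z ≤ M − k·q, one has F_{k,z}((−∞,l]) ≤ G_{k,z}((−∞,l])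 for all l ∈ ℝ. Then for every n ≥ 1 and every sequence of integers l₁, …, l_n satisfying l_k ≤ M − k·q for each k, P(S₁ > l₁, S₂ > l₂, …, S_n > l_n) ≥ P(T₁ > l₁, T₂ > l₂, …, T_n > l_n). -/
open MeasureTheory

/-- The cumulative distribution function `μ((-∞, l])` of a distribution `p` on the
nonnegative integers, evaluated at a real number `l`. -/
noncomputable def pmfCdf (p : PMF ℕ) (l : ℝ) : ENNReal :=
  p.toMeasure {m : ℕ | (m : ℝ) ≤ l}

/-- `surv F q l k n z` is the probability that the Markov chain started at time `k`
in state `z`, with increments `X_j ~ F_{j, state}` and steps `state ↦ state + X_j - q`,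
satisfies `S_{k+1} > l (k+1), …, S_{k+n} > l (k+n)`.  This is the finite-horizon law
given by iterated kernel composition. -/
noncomputable def surv (F : ℕ → ℤ → PMF ℕ) (q : ℕ) (l : ℕ → ℤ) :
    ℕ → ℕ → ℤ → ENNReal
  | _, 0, _ => 1
  | k, n + 1, z =>
      ∑' x : ℕ,
        F k z x *
          (if l (k + 1) < z + (x : ℤ) - q then surv F q l (k + 1) n (z + (x : ℤ) - q)
           else 0)

/-!
The proof is by induction on the horizon, run backwards in time. Write `u_k(z)` for the
probability that the chain started at time `k` in state `z` clears the remaining levels.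
Hypothesis (1) says exactly that `G_{k,z+1}` stochastically dominates the law of
`1 + Y` for `Y ~ G_{k,z}`, which makes each `u_k` for `G` nondecreasing in `z`. Below the
barrier `M - k q`, hypothesis (2) lets us replace `G_{k,z}` by the stochastically larger
`F_{k,z}` when integrating the nondecreasing function `u_{k+1}`; above the barrier every
later level lies below the current state, so the `F`-chain survives with probability one.
-/

open scoped ENNReal

noncomputable def pmfTail (p : PMF ℕ) (j : ℕ) : ℝ≥0∞ :=
  p.toMeasure {x | j < x}

theorem pmfTail_eq_one_sub_pmfCdf (p : PMF ℕ) (j : ℕ) : pmfTail p j = 1 - pmfCdf p j := by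
  have hcompl : {x : ℕ | j < x} = {m : ℕ | (m : ℝ) ≤ j}ᶜ := by
    ext m
    simp
  rw [pmfTail, pmfCdf, hcompl, prob_compl_eq_one_sub MeasurableSet.of_discrete]

theorem pmfTail_le_one (p : PMF ℕ) (j : ℕ) : pmfTail p j ≤ 1 :=
  prob_le_one

theorem pmfTail_le_pmfTail {p p' : PMF ℕ} {j j' : ℕ} (h : pmfCdf p' j' ≤ pmfCdf p j) :
    pmfTail p j ≤ pmfTail p' j' := by
  rw [pmfTail_eq_one_sub_pmfCdf, pmfTail_eq_one_sub_pmfCdf]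
  exact tsub_le_tsub_left h 1

theorem add_sum_range_tsub_of_monotone {φ : ℕ → ℝ≥0∞} (hφ : Monotone φ) (n : ℕ) :
    φ 0 + ∑ j ∈ Finset.range n, (φ (j + 1) - φ j) = φ n := by
  induction n with
  | zero => simp
  | succ n ih =>
    rw [Finset.sum_range_succ, ← add_assoc, ih, add_comm, tsub_add_cancel_of_le (hφ n.le_succ)]

/-- Summation by parts (the discrete layer-cake formula). -/
theorem tsum_mul_eq_add_tsum_mul_pmfTail (p : PMF ℕ) {φ : ℕ → ℝ≥0∞} (hφ : Monotone φ) :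
    ∑' x, p x * φ x = φ 0 + ∑' j, (φ (j + 1) - φ j) * pmfTail p j := by
  have hpoint : ∀ x, p x * φ x
      = p x * φ 0 + ∑' j, if j < x then (φ (j + 1) - φ j) * p x else 0 := by
    intro x
    rw [tsum_eq_sum (s := Finset.range x) fun j hj => if_neg (by simpa using hj),
      Finset.sum_congr rfl fun j hj => if_pos (Finset.mem_range.mp hj), ← Finset.sum_mul,
      ← add_sum_range_tsub_of_monotone hφ x]
    ring
  have htail : ∀ j, pmfTail p j = ∑' x, if j < x then p x else 0 := by
    intro j
    rw [pmfTail, PMF.toMeasure_apply _ MeasurableSet.of_discrete]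
    simp only [Set.indicator_apply, Set.mem_ofPred_eq]
  simp_rw [hpoint, ENNReal.tsum_add, ENNReal.tsum_mul_right, p.tsum_coe, one_mul, htail,
    ← ENNReal.tsum_mul_left, mul_ite, mul_zero]
  rw [ENNReal.tsum_comm]

/-- The tail condition says that `p` is stochastically dominated by the law of `Y + d`,
`Y ~ p'`. -/
theorem tsum_mul_le_tsum_mul_add {p p' : PMF ℕ} {φ : ℕ → ℝ≥0∞} (hφ : Monotone φ) (d : ℕ)
    (h : ∀ j, pmfTail p (j + d) ≤ pmfTail p' j) :
    ∑' x, p x * φ x ≤ ∑' x, p' x * φ (x + d) := by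
  have hφd : Monotone fun x => φ (x + d) := fun a b hab => hφ (by omega)
  rw [tsum_mul_eq_add_tsum_mul_pmfTail p hφ, tsum_mul_eq_add_tsum_mul_pmfTail p' hφd,
    ← Summable.sum_add_tsum_nat_add' (k := d) ENNReal.summable]
  calc φ 0 + (∑ j ∈ Finset.range d, (φ (j + 1) - φ j) * pmfTail p j
        + ∑' j, (φ (j + d + 1) - φ (j + d)) * pmfTail p (j + d))
      ≤ φ 0 + (∑ j ∈ Finset.range d, (φ (j + 1) - φ j) * 1
        + ∑' j, (φ (j + d + 1) - φ (j + d)) * pmfTail p' j) := by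
        gcongr with j _ j
        · exact pmfTail_le_one p j
        · exact h j
    _ = φ (0 + d) + ∑' j, (φ (j + 1 + d) - φ (j + d)) * pmfTail p' j := by
        simp only [mul_one, ← add_assoc, add_sum_range_tsub_of_monotone hφ, zero_add,
          add_right_comm _ 1 d]

theorem monotone_ite_lt {α : Type*} [LinearOrder α] {f : α → ℝ≥0∞} (hf : Monotone f)
    (c : α) :
    Monotone fun u => if c < u then f u else 0 := by
  intro a b hab
  dsimp only
  split_ifs with ha hb
  · exact hf hab
  · exact absurd (ha.trans_le hab) hb
  · exact zero_le
  · exact le_rfl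

section surv

variable {F G : ℕ → ℤ → PMF ℕ} {q : ℕ} {l : ℕ → ℤ}

theorem surv_le_one (n k : ℕ) (z : ℤ) : surv F q l k n z ≤ 1 := by
  induction n generalizing k z with
  | zero => exact le_rfl
  | succ n ih =>
    calc surv F q l k (n + 1) z ≤ ∑' x, F k z x * 1 := by
          refine ENNReal.tsum_le_tsum fun x => mul_le_mul_right ?_ _
          split_ifs
          exacts [ih _ _, zero_le_one]
      _ = 1 := by rw [ENNReal.tsum_mul_right, PMF.tsum_coe, one_mul]

/-- Above the barrier `M - k q` all remaining levels are below every reachable state. -/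
theorem surv_eq_one_of_lt {M : ℤ} {n k : ℕ} {z : ℤ}
    (hl : ∀ j, k < j → j ≤ k + n → l j ≤ M - j * q) (hz : M - k * q < z) :
    surv F q l k n z = 1 := by
  induction n generalizing k z with
  | zero => rfl
  | succ n ih =>
    have hstep : ∀ x : ℕ, M - (k + 1 : ℕ) * q < z + (x : ℤ) - q := fun x => by
      push_cast; linarith
    calc surv F q l k (n + 1) z = ∑' x, F k z x * 1 := by
          refine tsum_congr fun x => ?_
          have hlev : l (k + 1) < z + (x : ℤ) - q :=
            (hl (k + 1) k.lt_succ_self (by omega)).trans_lt (hstep x)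
          rw [if_pos hlev, ih (fun j hj hj' => hl j (by omega) (by omega)) (hstep x)]
      _ = 1 := by rw [ENNReal.tsum_mul_right, PMF.tsum_coe, one_mul]

theorem surv_monotone
    (h1 : ∀ (k : ℕ) (z : ℤ) (r : ℝ), pmfCdf (G k z) r ≤ pmfCdf (G k (z - 1)) (r + 1))
    (n k : ℕ) : Monotone (surv G q l k n) := by
  induction n generalizing k with
  | zero => exact monotone_const
  | succ n ih =>
    refine monotone_int_of_le_succ fun z => ?_
    set ψ : ℤ → ℝ≥0∞ := fun u => if l (k + 1) < u then surv G q l (k + 1) n u else 0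
    have hφ : Monotone fun x : ℕ => ψ (z + x - q) :=
      (monotone_ite_lt (ih (k + 1)) _).comp fun _ _ _ => by omega
    have htail : ∀ j, pmfTail (G k z) (j + 1) ≤ pmfTail (G k (z + 1)) j := fun j =>
      pmfTail_le_pmfTail (by simpa using h1 k (z + 1) j)
    calc surv G q l k (n + 1) z
        ≤ ∑' x, G k (z + 1) x * ψ (z + ((x + 1 : ℕ) : ℤ) - q) :=
          tsum_mul_le_tsum_mul_add hφ 1 htail
      _ = surv G q l k (n + 1) (z + 1) := by
          refine tsum_congr fun x => ?_
          rw [show z + ((x + 1 : ℕ) : ℤ) - q = z + 1 + x - q by push_cast; ring]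

theorem surv_le_surv {M : ℤ}
    (h1 : ∀ (k : ℕ) (z : ℤ) (r : ℝ), pmfCdf (G k z) r ≤ pmfCdf (G k (z - 1)) (r + 1))
    (h2 : ∀ (k : ℕ) (z : ℤ), z ≤ M - k * q →
      ∀ r : ℝ, pmfCdf (F k z) r ≤ pmfCdf (G k z) r)
    {n k : ℕ} {z : ℤ} (hl : ∀ j, k < j → j ≤ k + n → l j ≤ M - j * q) :
    surv G q l k n z ≤ surv F q l k n z := by
  induction n generalizing k z with
  | zero => exact le_rfl
  | succ n ih =>
    rcases lt_or_ge (M - k * q) z with hz | hz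
    · rw [surv_eq_one_of_lt (F := F) hl hz]
      exact surv_le_one _ _ _
    set ψ : ℤ → ℝ≥0∞ := fun u => if l (k + 1) < u then surv G q l (k + 1) n u else 0
    have hφ : Monotone fun x : ℕ => ψ (z + x - q) :=
      (monotone_ite_lt (surv_monotone h1 n (k + 1)) _).comp fun _ _ _ => by omega
    have htail : ∀ j, pmfTail (G k z) (j + 0) ≤ pmfTail (F k z) j := fun j =>
      pmfTail_le_pmfTail (h2 k z hz j)
    calc surv G q l k (n + 1) z ≤ ∑' x, F k z x * ψ (z + x - q) :=
          tsum_mul_le_tsum_mul_add hφ 0 htail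
      _ ≤ surv F q l k (n + 1) z := by
          refine ENNReal.tsum_le_tsum fun x => mul_le_mul_right ?_ _
          dsimp only [ψ]
          split_ifs
          exacts [ih (fun j hj hj' => hl j (by omega) (by omega)), le_rfl]

end surv

theorem markov_additive_comparison_general (F G : ℕ → ℤ → PMF ℕ) (q : ℕ) (b M : ℤ)
    (h1 : ∀ (k : ℕ) (z : ℤ) (l : ℝ), pmfCdf (G k z) l ≤ pmfCdf (G k (z - 1)) (l + 1))
    (h2 : ∀ (k : ℕ) (z : ℤ), z ≤ M - k * q →
      ∀ l : ℝ, pmfCdf (F k z) l ≤ pmfCdf (G k z) l)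
    (n : ℕ) (l : ℕ → ℤ)
    (hl : ∀ k, 1 ≤ k → k ≤ n → l k ≤ M - k * q) :
    surv G q l 0 n b ≤ surv F q l 0 n b :=
  surv_le_surv h1 h2 fun j hj hjn => hl j hj (by omega)

/-- Comparison lemma for two Markov additive processes. Suppose `S` and `T` start at
`b`, evolve by `S_{k+1} = S_k + X_k - q` with `X_k ~ F_{k,S_k}` and
`T_{k+1} = T_k + Y_k - q` with `Y_k ~ G_{k,T_k}`.  If (1) the CDFs of `G` satisfy
`G_{k,z}((-∞,l]) ≤ G_{k,z-1}((-∞,l+1])`, and (2) there is `M ≥ b` with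
`F_{k,z} ≻ G_{k,z}` (CDF domination) whenever `z ≤ M - k q`, then for all levels
`l_k ≤ M - k q`, `P(S₁ > l₁, …, S_n > l_n) ≥ P(T₁ > l₁, …, T_n > l_n)`. -/
theorem markov_additive_comparison (F G : ℕ → ℤ → PMF ℕ) (q : ℕ) (b M : ℤ)
    (hbM : b ≤ M)
    (h1 : ∀ (k : ℕ) (z : ℤ) (l : ℝ), pmfCdf (G k z) l ≤ pmfCdf (G k (z - 1)) (l + 1))
    (h2 : ∀ (k : ℕ) (z : ℤ), z ≤ M - k * q →
      ∀ l : ℝ, pmfCdf (F k z) l ≤ pmfCdf (G k z) l)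
    (n : ℕ) (hn : 1 ≤ n) (l : ℕ → ℤ)
    (hl : ∀ k, 1 ≤ k → k ≤ n → l k ≤ M - k * q) :
    surv G q l 0 n b ≤ surv F q l 0 n b :=
  markov_additive_comparison_general F G q b M h1 h2 n l hl
end

section
/- Let z ≥ 2 be an integer and p₂, p₃ ∈ [0,1]. Let E₂ and E₃ be independent random variables with E₂ distributed Binomial(C(z,2), p₂) and E₃ distributed Binomial(C(z,3), p₃), and set E = E₂ + E₃. Then for every real s ≥ 1, P(E ≥ z−1) ≤ s^{−(z−1)} · (1 + p₂(s−1))^{z²/2} · (1 + p₃(s−1))^{z³/6}. -/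
/-!
Chernoff's method. Markov's inequality applied to `s ^ E` bounds the tail by `s ^ -(z - 1)`
times the probability generating function of `E`, which by independence is the product of those
of `E₂` and `E₃`. The generating function of `Bin(N, p)` is `(1 + p (s - 1)) ^ N` by the
binomial theorem, and since `1 + p (s - 1) ≥ 1` the exponents `C(z, k)` may be raised to
`z ^ k / k!`.
-/

open MeasureTheory Real

/-- The binomial distribution with `N` trials and success probability `p`, as a
measure on `ℕ`. -/
noncomputable def binomialMeasure (N : ℕ) (p : ℝ) : Measure ℕ :=
  ∑ k ∈ Finset.range (N + 1),
    (ENNReal.ofReal ((N.choose k : ℝ) * p ^ k * (1 - p) ^ (N - k))) • Measure.dirac k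

open scoped ENNReal
open ProbabilityTheory

lemma lintegral_pow_binomialMeasure (N : ℕ) {p : ℝ} (hp : p ∈ Set.Icc (0 : ℝ) 1) {s : ℝ}
    (hs : 0 ≤ s) :
    ∫⁻ n, ENNReal.ofReal s ^ n ∂binomialMeasure N p = ENNReal.ofReal ((1 + p * (s - 1)) ^ N) := by
  have hweight (k : ℕ) : 0 ≤ (N.choose k : ℝ) * p ^ k * (1 - p) ^ (N - k) := by
    have := sub_nonneg.2 hp.2
    have := hp.1
    positivity
  have hbinom : (1 + p * (s - 1)) ^ N =
      ∑ k ∈ Finset.range (N + 1), (N.choose k : ℝ) * p ^ k * (1 - p) ^ (N - k) * s ^ k := by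
    rw [show 1 + p * (s - 1) = p * s + (1 - p) by ring, add_pow]
    exact Finset.sum_congr rfl fun k _ => by ring
  simp only [binomialMeasure, lintegral_finsetSum_measure, lintegral_smul_measure,
    lintegral_dirac, smul_eq_mul]
  rw [hbinom, ENNReal.ofReal_sum_of_nonneg fun k _ => by have := hweight k; positivity]
  refine Finset.sum_congr rfl fun k _ => ?_
  rw [← ENNReal.ofReal_pow hs, ← ENNReal.ofReal_mul (hweight k)]

section

variable {Ω : Type*} [MeasurableSpace Ω] {μ : Measure Ω}

lemma lintegral_pow_eq_of_map_eq_binomialMeasure {X : Ω → ℕ} (hX : Measurable X) {N : ℕ} {p : ℝ}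
    (hp : p ∈ Set.Icc (0 : ℝ) 1) (hXμ : μ.map X = binomialMeasure N p) {s : ℝ} (hs : 0 ≤ s) :
    ∫⁻ ω, ENNReal.ofReal s ^ X ω ∂μ = ENNReal.ofReal ((1 + p * (s - 1)) ^ N) := by
  rw [← lintegral_map measurable_from_nat hX, hXμ, lintegral_pow_binomialMeasure N hp hs]

lemma lintegral_pow_add_of_indepFun {X Y : Ω → ℕ} (hX : Measurable X) (hY : Measurable Y)
    (hXY : IndepFun X Y μ) (t : ℝ≥0∞) :
    ∫⁻ ω, t ^ (X ω + Y ω) ∂μ = (∫⁻ ω, t ^ X ω ∂μ) * ∫⁻ ω, t ^ Y ω ∂μ := by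
  simp only [pow_add]
  exact lintegral_mul_eq_lintegral_mul_lintegral_of_indepFun''
    (measurable_from_nat.comp hX).aemeasurable (measurable_from_nat.comp hY).aemeasurable
    (hXY.comp measurable_from_nat measurable_from_nat)

lemma measure_ge_le_rpow_neg_mul_lintegral_pow {X : Ω → ℕ} (hX : Measurable X) (k : ℕ) {s : ℝ}
    (hs : 1 ≤ s) :
    μ {ω | k ≤ X ω} ≤ ENNReal.ofReal (s ^ (-(k : ℝ))) * ∫⁻ ω, ENNReal.ofReal s ^ X ω ∂μ := by
  have hs0 : 0 < s := zero_lt_one.trans_le hs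
  have hmono : {ω | k ≤ X ω} ⊆ {ω | ENNReal.ofReal s ^ k ≤ ENNReal.ofReal s ^ X ω} :=
    fun ω hω => pow_le_pow_right₀ (ENNReal.one_le_ofReal.2 hs) hω
  have hcancel : ENNReal.ofReal (s ^ (-(k : ℝ))) * ENNReal.ofReal s ^ k = 1 := by
    rw [← ENNReal.ofReal_pow hs0.le, ← ENNReal.ofReal_mul (by positivity), rpow_neg hs0.le,
      rpow_natCast, inv_mul_cancel₀ (by positivity), ENNReal.ofReal_one]
  calc μ {ω | k ≤ X ω}
      ≤ ENNReal.ofReal (s ^ (-(k : ℝ))) * (ENNReal.ofReal s ^ k *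
          μ {ω | ENNReal.ofReal s ^ k ≤ ENNReal.ofReal s ^ X ω}) := by
        rw [← mul_assoc, hcancel, one_mul]; exact measure_mono hmono
    _ ≤ _ := by gcongr; exact mul_meas_ge_le_lintegral (measurable_from_nat.comp hX) _

end

lemma pow_le_rpow_of_natCast_le {a : ℝ} (ha : 1 ≤ a) {n : ℕ} {x : ℝ} (hnx : (n : ℝ) ≤ x) :
    a ^ n ≤ a ^ x := by
  rw [← rpow_natCast]
  exact rpow_le_rpow_of_exponent_le ha hnx

theorem binomial_sum_tail_bound_general (z : ℕ) (p₂ p₃ : ℝ)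
    (hp₂ : p₂ ∈ Set.Icc (0 : ℝ) 1) (hp₃ : p₃ ∈ Set.Icc (0 : ℝ) 1)
    (Ω : Type) [MeasurableSpace Ω] (μ : Measure Ω)
    (E₂ E₃ : Ω → ℕ) (hm₂ : Measurable E₂) (hm₃ : Measurable E₃)
    (hind : ProbabilityTheory.IndepFun E₂ E₃ μ)
    (h₂ : Measure.map E₂ μ = binomialMeasure (z.choose 2) p₂)
    (h₃ : Measure.map E₃ μ = binomialMeasure (z.choose 3) p₃)
    (s : ℝ) (hs : 1 ≤ s) :
    μ {ω | z - 1 ≤ E₂ ω + E₃ ω} ≤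
      ENNReal.ofReal
        (s ^ (-((z : ℝ) - 1)) * (1 + p₂ * (s - 1)) ^ ((z : ℝ) ^ 2 / 2) *
          (1 + p₃ * (s - 1)) ^ ((z : ℝ) ^ 3 / 6)) := by
  have hs0 : 0 ≤ s := zero_le_one.trans hs
  have hb₂ : 1 ≤ 1 + p₂ * (s - 1) := le_add_of_nonneg_right (by nlinarith [hp₂.1])
  have hb₃ : 1 ≤ 1 + p₃ * (s - 1) := le_add_of_nonneg_right (by nlinarith [hp₃.1])
  -- `z - 1` is truncated in `ℕ`, which only makes the bound weaker.
  have hexp : -(((z - 1 : ℕ) : ℝ)) ≤ -((z : ℝ) - 1) := by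
    have : z ≤ z - 1 + 1 := by omega
    rw [neg_le_neg_iff, sub_le_iff_le_add]
    exact_mod_cast this
  calc μ {ω | z - 1 ≤ E₂ ω + E₃ ω}
      ≤ ENNReal.ofReal (s ^ (-(((z - 1 : ℕ) : ℝ)))) *
          ∫⁻ ω, ENNReal.ofReal s ^ (E₂ ω + E₃ ω) ∂μ :=
        measure_ge_le_rpow_neg_mul_lintegral_pow (hm₂.add hm₃) (z - 1) hs
    _ = ENNReal.ofReal (s ^ (-(((z - 1 : ℕ) : ℝ))) * (1 + p₂ * (s - 1)) ^ z.choose 2 *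
          (1 + p₃ * (s - 1)) ^ z.choose 3) := by
        rw [lintegral_pow_add_of_indepFun hm₂ hm₃ hind,
          lintegral_pow_eq_of_map_eq_binomialMeasure hm₂ hp₂ h₂ hs0,
          lintegral_pow_eq_of_map_eq_binomialMeasure hm₃ hp₃ h₃ hs0, mul_assoc,
          ENNReal.ofReal_mul (by positivity),
          ENNReal.ofReal_mul (pow_nonneg (zero_le_one.trans hb₂) _)]
    _ ≤ _ := by
        gcongr ENNReal.ofReal (?_ * ?_ * ?_)
        · exact rpow_le_rpow_of_exponent_le hs hexp
        · exact pow_le_rpow_of_natCast_le hb₂ (by simpa using Nat.choose_le_pow_div 2 z)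
        · exact pow_le_rpow_of_natCast_le hb₃
            (by simpa [Nat.factorial] using Nat.choose_le_pow_div 3 z)

/-- Generating-function bound: if `E₂ ~ Bin(C(z,2), p₂)` and `E₃ ~ Bin(C(z,3), p₃)`
are independent and `E = E₂ + E₃`, then for all `s ≥ 1`,
`P(E ≥ z-1) ≤ s^{-(z-1)} (1+p₂(s-1))^{z²/2} (1+p₃(s-1))^{z³/6}`. -/
theorem binomial_sum_tail_bound (z : ℕ) (hz : 2 ≤ z) (p₂ p₃ : ℝ)
    (hp₂ : p₂ ∈ Set.Icc (0 : ℝ) 1) (hp₃ : p₃ ∈ Set.Icc (0 : ℝ) 1)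
    (Ω : Type) [MeasurableSpace Ω] (μ : Measure Ω) [IsProbabilityMeasure μ]
    (E₂ E₃ : Ω → ℕ) (hm₂ : Measurable E₂) (hm₃ : Measurable E₃)
    (hind : ProbabilityTheory.IndepFun E₂ E₃ μ)
    (h₂ : Measure.map E₂ μ = binomialMeasure (z.choose 2) p₂)
    (h₃ : Measure.map E₃ μ = binomialMeasure (z.choose 3) p₃)
    (s : ℝ) (hs : 1 ≤ s) :
    μ {ω | z - 1 ≤ E₂ ω + E₃ ω} ≤
      ENNReal.ofReal
        (s ^ (-((z : ℝ) - 1)) * (1 + p₂ * (s - 1)) ^ ((z : ℝ) ^ 2 / 2) *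
          (1 + p₃ * (s - 1)) ^ ((z : ℝ) ^ 3 / 6)) :=
  binomial_sum_tail_bound_general z p₂ p₃ hp₂ hp₃ Ω μ E₂ E₃ hm₂ hm₃ hind h₂ h₃ s hs
end

section
/- Consider the Markov chain (Y_t)_{t≥0} on the integers defined by Y₀ = 1 and Y_{t+1} = Y_t + Z_t − 1, where conditionally on Y₀,…,Y_t the increment Z_t has law Binomial(max(n − t − Y_t, 0), p(t)) with p(t) = 1 − (1−p₂)(1−p₃)^t. Let K₀ = max{1, 2(9+ε)/r}. Then for every constant c > 0 there exists a constant K₁(c) > 0 such that, for all sufficiently large n and every positive integer T ≤ K₀·ln n, P(T + Y_T > K₁(c)·ln n) < n^{−c}. -/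
open MeasureTheory Real

/-- The constant `K₀ = max {1, 2(9+ε)/r}`. -/
noncomputable def K0 (ε r : ℝ) : ℝ := max 1 (2 * (9 + ε) / r)

/-- The edge-hitting probability `p(t) = 1 - (1-p₂)(1-p₃)^t` with `p₂ = (1-ε)/n`
and `p₃ = r/(n ln n)`. -/
noncomputable def pfun (n : ℕ) (ε r : ℝ) (t : ℕ) : ℝ :=
  1 - (1 - (1 - ε) / n) * (1 - r / (n * Real.log n)) ^ t

/-- The law of `Y_t` for the exploration Markov chain: `Y₀ = 1` and
`Y_{t+1} = Y_t + Z_t - 1` where, given `Y_t = y`, the increment `Z_t` is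
`Binomial(max(n - t - y, 0), p(t))`-distributed. -/
noncomputable def Ylaw (n : ℕ) (ε r : ℝ) : ℕ → Measure ℤ
  | 0 => Measure.dirac 1
  | t + 1 =>
      (Ylaw n ε r t).bind fun y =>
        (binomialMeasure ((n : ℤ) - t - y).toNat (pfun n ε r t)).map
          fun z : ℕ => y + (z : ℤ) - 1

/-! Chernoff bound on the exponential moment. Given `Y_t = y`, the increment is binomial with at
most `n` trials and success probability `p(t) ≤ (1 + K₀ r)/n` for `t ≤ K₀ ln n`, so
`E[e^{Y_{t+1}} | Y_t = y] ≤ e^{y - 1} (1 + p(t)(e - 1))^n ≤ e^{y + D - 1}` with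
`D = (1 + K₀ r)(e - 1)`. Hence `E[e^{Y_T}] ≤ e^{1 + (D - 1) T}`, and Markov's inequality gives
`P(T + Y_T > K₁ ln n) ≤ e^{1 + D T - K₁ ln n} ≤ e^{1 - (c + 2) ln n} < n^{-c}` for
`K₁ = D K₀ + c + 2`. -/

open scoped ENNReal

lemma lintegral_binomialMeasure (N : ℕ) (p : ℝ) (g : ℕ → ℝ≥0∞) :
    ∫⁻ z, g z ∂binomialMeasure N p =
      ∑ k ∈ Finset.range (N + 1),
        ENNReal.ofReal ((N.choose k : ℝ) * p ^ k * (1 - p) ^ (N - k)) * g k := by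
  simp [binomialMeasure, lintegral_smul_measure]

lemma lintegral_exp_binomialMeasure (N : ℕ) {p : ℝ} (hp0 : 0 ≤ p) (hp1 : p ≤ 1) (s : ℝ) :
    ∫⁻ z, ENNReal.ofReal (exp (s * z)) ∂binomialMeasure N p =
      ENNReal.ofReal ((1 - p + p * exp s) ^ N) := by
  have hw : ∀ k, 0 ≤ (N.choose k : ℝ) * p ^ k * (1 - p) ^ (N - k) := fun k => by
    have : 0 ≤ 1 - p := by linarith
    positivity
  simp_rw [lintegral_binomialMeasure, ← ENNReal.ofReal_mul (hw _)]
  rw [← ENNReal.ofReal_sum_of_nonneg fun k _ => mul_nonneg (hw k) (exp_nonneg _),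
    show 1 - p + p * exp s = p * exp s + (1 - p) by ring, add_pow]
  refine congrArg ENNReal.ofReal (Finset.sum_congr rfl fun k _ => ?_)
  rw [mul_comm s, exp_nat_mul]
  ring

lemma lintegral_exp_binomialMeasure_le (N : ℕ) {p : ℝ} (hp0 : 0 ≤ p) (hp1 : p ≤ 1)
    (s : ℝ) :
    ∫⁻ z, ENNReal.ofReal (exp (s * z)) ∂binomialMeasure N p ≤
      ENNReal.ofReal (exp (N * (p * (exp s - 1)))) := by
  rw [lintegral_exp_binomialMeasure N hp0 hp1, exp_nat_mul]
  refine ENNReal.ofReal_le_ofReal (pow_le_pow_left₀ (by nlinarith [exp_pos s]) ?_ N)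
  linarith [add_one_le_exp (p * (exp s - 1))]

lemma measure_lt_le_exp_neg_mul_lintegral_exp {α : Type*} [MeasurableSpace α] (μ : Measure α)
    {f : α → ℝ} (hf : Measurable f) (a : ℝ) :
    μ {x | a < f x} ≤
      ENNReal.ofReal (exp (-a)) * ∫⁻ x, ENNReal.ofReal (exp (f x)) ∂μ := by
  have hmarkov := mul_meas_ge_le_lintegral (μ := μ) hf.exp.ennreal_ofReal
    (ENNReal.ofReal (exp a))
  calc μ {x | a < f x}
      = ENNReal.ofReal (exp (-a)) * ENNReal.ofReal (exp a) * μ {x | a < f x} := by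
        rw [← ENNReal.ofReal_mul (exp_nonneg _), ← exp_add, neg_add_cancel, exp_zero,
          ENNReal.ofReal_one, one_mul]
    _ ≤ _ := by
        rw [mul_assoc]
        refine mul_le_mul_right (le_trans (mul_le_mul_right (measure_mono fun x hx => ?_) _)
          hmarkov) _
        exact ENNReal.ofReal_le_ofReal (exp_le_exp.mpr (le_of_lt hx))

lemma one_sub_mul_one_sub_pow_mem_Icc {a b : ℝ} (ha0 : 0 ≤ a) (ha1 : a ≤ 1) (hb0 : 0 ≤ b)
    (hb1 : b ≤ 1) (t : ℕ) : 1 - (1 - a) * (1 - b) ^ t ∈ Set.Icc 0 1 := by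
  have h0 : 0 ≤ (1 - b) ^ t := pow_nonneg (by linarith) t
  have h1 : (1 - b) ^ t ≤ 1 := pow_le_one₀ (by linarith) (by linarith)
  constructor <;> nlinarith

lemma one_sub_mul_one_sub_pow_le {a b : ℝ} (ha0 : 0 ≤ a) (ha1 : a ≤ 1) (hb0 : 0 ≤ b)
    (hb2 : b ≤ 2) (t : ℕ) : 1 - (1 - a) * (1 - b) ^ t ≤ a + t * b := by
  have hbernoulli : 1 + t * -b ≤ (1 + -b) ^ t := one_add_mul_le_pow (by linarith) t
  rw [← sub_eq_add_neg] at hbernoulli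
  nlinarith [mul_le_mul_of_nonneg_left hbernoulli (by linarith : 0 ≤ 1 - a),
    mul_nonneg (mul_nonneg ha0 (Nat.cast_nonneg t)) hb0]

lemma pfun_bounds {ε r : ℝ} (hε0 : 0 < ε) (hε1 : ε < 1) (hr : 0 < r) {n : ℕ}
    (hlog : 1 ≤ log n) (hrn : r ≤ n) {t : ℕ} (ht : t ≤ K0 ε r * log n) :
    0 ≤ pfun n ε r t ∧ pfun n ε r t ≤ 1 ∧ n * pfun n ε r t ≤ 1 + K0 ε r * r := by
  have hn : (1 : ℝ) ≤ n := by
    by_contra! h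
    have : log n = 0 := by
      rcases Nat.lt_one_iff.mp (by exact_mod_cast h) with rfl
      simp
    linarith
  have hp₂0 : 0 ≤ (1 - ε) / n := by positivity
  have hp₂1 : (1 - ε) / n ≤ 1 := by rw [div_le_one (by positivity)]; linarith
  have hp₃0 : 0 ≤ r / (n * log n) := by positivity
  have hp₃1 : r / (n * log n) ≤ 1 := by rw [div_le_one (by positivity)]; nlinarith
  obtain ⟨hpos, hle⟩ := one_sub_mul_one_sub_pow_mem_Icc hp₂0 hp₂1 hp₃0 hp₃1 t
  refine ⟨hpos, hle, ?_⟩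
  calc n * pfun n ε r t ≤ n * ((1 - ε) / n + t * (r / (n * log n))) := by
        gcongr
        exact one_sub_mul_one_sub_pow_le hp₂0 hp₂1 hp₃0 (by linarith) t
    _ = 1 - ε + t * r / log n := by field_simp
    _ ≤ 1 + K0 ε r * r := by
        have hdrift : t * r / log n ≤ K0 ε r * r := by
          rw [div_le_iff₀ (by linarith)]
          nlinarith
        linarith

lemma Ylaw_ae_ge (n : ℕ) (ε r : ℝ) (t : ℕ) :
    ∀ᵐ y ∂Ylaw n ε r t, 1 - (t : ℤ) ≤ y := by
  induction t with
  | zero => simp [Ylaw]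
  | succ t ih =>
    rw [Ylaw, ae_iff, Measure.bind_apply .of_discrete .of_discrete,
      lintegral_eq_zero_iff Measurable.of_discrete]
    filter_upwards [ih] with y hy
    rw [Pi.zero_apply, Measure.map_apply Measurable.of_discrete .of_discrete]
    convert measure_empty (μ := binomialMeasure ((n : ℤ) - t - y).toNat (pfun n ε r t))
    ext z
    simp only [Set.mem_preimage, Set.mem_ofPred_eq, Set.mem_empty_iff_false, iff_false, not_not]
    push_cast
    omega

lemma lintegral_exp_Ylaw_succ_le {n : ℕ} {ε r B : ℝ} {t : ℕ} (hp0 : 0 ≤ pfun n ε r t)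
    (hp1 : pfun n ε r t ≤ 1) (hB : n * pfun n ε r t ≤ B) :
    ∫⁻ y, ENNReal.ofReal (exp y) ∂Ylaw n ε r (t + 1) ≤
      ENNReal.ofReal (exp (B * (exp 1 - 1) - 1)) *
        ∫⁻ y, ENNReal.ofReal (exp y) ∂Ylaw n ε r t := by
  rw [Ylaw, Measure.lintegral_bind Measurable.of_discrete.aemeasurable
    Measurable.of_discrete.aemeasurable, ← lintegral_const_mul _ Measurable.of_discrete]
  refine lintegral_mono_ae ?_
  filter_upwards [Ylaw_ae_ge n ε r t] with y hy
  set M := ((n : ℤ) - t - y).toNat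
  -- `M ≤ n` only because `y ≥ 1 - t` on the support: for smaller `y`, `M` would exceed `n`
  have hM : (M : ℝ) ≤ n := by exact_mod_cast Int.toNat_le.mpr (by omega)
  have hsplit : ∀ z : ℕ, ENNReal.ofReal (exp ((y + z - 1 : ℤ) : ℝ)) =
      ENNReal.ofReal (exp (y - 1)) * ENNReal.ofReal (exp (1 * z)) := fun z => by
    rw [← ENNReal.ofReal_mul (exp_nonneg _), ← exp_add]
    push_cast
    ring_nf
  simp_rw [lintegral_map Measurable.of_discrete Measurable.of_discrete, hsplit]
  rw [lintegral_const_mul _ Measurable.of_discrete]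
  calc _ ≤ ENNReal.ofReal (exp (y - 1)) *
        ENNReal.ofReal (exp (M * (pfun n ε r t * (exp 1 - 1)))) := by
        gcongr
        exact lintegral_exp_binomialMeasure_le M hp0 hp1 1
    _ ≤ _ := by
        have he : 0 ≤ exp 1 - 1 := by linarith [add_one_le_exp 1]
        have hMp : M * pfun n ε r t ≤ B := (mul_le_mul_of_nonneg_right hM hp0).trans hB
        rw [← ENNReal.ofReal_mul (exp_nonneg _), ← ENNReal.ofReal_mul (exp_nonneg _),
          ← exp_add, ← exp_add]
        exact ENNReal.ofReal_le_ofReal (exp_le_exp.mpr (by nlinarith))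

lemma lintegral_exp_Ylaw_le {n : ℕ} {ε r B : ℝ} {T : ℕ}
    (hp : ∀ t < T, 0 ≤ pfun n ε r t ∧ pfun n ε r t ≤ 1 ∧ n * pfun n ε r t ≤ B) :
    ∫⁻ y, ENNReal.ofReal (exp y) ∂Ylaw n ε r T ≤
      ENNReal.ofReal (exp (1 + (B * (exp 1 - 1) - 1) * T)) := by
  induction T with
  | zero => simp [Ylaw]
  | succ T ih =>
    obtain ⟨hp0, hp1, hB⟩ := hp T T.lt_succ_self
    calc _ ≤ ENNReal.ofReal (exp (B * (exp 1 - 1) - 1)) *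
          ∫⁻ y, ENNReal.ofReal (exp y) ∂Ylaw n ε r T := lintegral_exp_Ylaw_succ_le hp0 hp1 hB
      _ ≤ ENNReal.ofReal (exp (B * (exp 1 - 1) - 1)) *
          ENNReal.ofReal (exp (1 + (B * (exp 1 - 1) - 1) * T)) := by
          gcongr
          exact ih fun t ht => hp t (ht.trans T.lt_succ_self)
      _ = _ := by
          rw [← ENNReal.ofReal_mul (exp_nonneg _), ← exp_add]
          push_cast
          ring_nf

/-- For every `c > 0` there is `K₁ > 0` such that for all sufficiently large `n`
and every positive integer `T ≤ K₀ ln n`, the exploration chain satisfies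
`P(T + Y_T > K₁ ln n) < n^{-c}`. -/
theorem exploration_chain_tail_bound (ε r : ℝ) (hε0 : 0 < ε) (hε1 : ε < 1)
    (hr : 0 < r) :
    ∀ c > (0 : ℝ), ∃ K₁ > (0 : ℝ), ∃ N : ℕ, ∀ n ≥ N, ∀ T : ℕ, 1 ≤ T →
      (T : ℝ) ≤ K0 ε r * Real.log n →
      Ylaw n ε r T {y : ℤ | K₁ * Real.log n < (T : ℝ) + (y : ℝ)} <
        ENNReal.ofReal ((n : ℝ) ^ (-c)) := by
  intro c hc
  set K := K0 ε r
  set D := (1 + K * r) * (exp 1 - 1)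
  have hK : 1 ≤ K := le_max_left _ _
  have hD : 1 ≤ D := by
    have he : 1 ≤ exp 1 - 1 := by linarith [add_one_le_exp (1 : ℝ)]
    nlinarith [mul_nonneg (by linarith : 0 ≤ K) hr.le]
  refine ⟨D * K + c + 2, by nlinarith, max 3 ⌈r⌉₊, fun n hn T _ hT => ?_⟩
  have hn3 : (3 : ℝ) ≤ n := by exact_mod_cast (le_max_left _ _).trans hn
  have hrn : r ≤ n := (Nat.le_ceil r).trans (by exact_mod_cast (le_max_right _ _).trans hn)
  have hlog : 1 ≤ log n := by
    rw [le_log_iff_exp_le (by linarith)]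
    linarith [exp_one_lt_d9]
  have hmgf := lintegral_exp_Ylaw_le (B := 1 + K * r) (T := T) fun t ht =>
    pfun_bounds hε0 hε1 hr hlog hrn (le_trans (by exact_mod_cast ht.le) hT)
  have hset : {y : ℤ | (D * K + c + 2) * log n < T + (y : ℝ)} =
      {y : ℤ | (D * K + c + 2) * log n - T < (y : ℝ)} := by
    ext y
    simp only [Set.mem_ofPred_eq, sub_lt_iff_lt_add']
  calc Ylaw n ε r T {y : ℤ | (D * K + c + 2) * log n < T + (y : ℝ)}
      ≤ ENNReal.ofReal (exp (-((D * K + c + 2) * log n - T))) *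
          ENNReal.ofReal (exp (1 + (D - 1) * T)) := by
        rw [hset]
        exact (measure_lt_le_exp_neg_mul_lintegral_exp _ Measurable.of_discrete _).trans
          (mul_le_mul_right hmgf _)
    _ = ENNReal.ofReal (exp (1 + D * T - (D * K + c + 2) * log n)) := by
        rw [← ENNReal.ofReal_mul (exp_nonneg _), ← exp_add]
        ring_nf
    _ < ENNReal.ofReal ((n : ℝ) ^ (-c)) := by
        rw [ENNReal.ofReal_lt_ofReal_iff (by positivity), rpow_def_of_pos (by linarith)]
        exact exp_lt_exp.mpr (by nlinarith)
end
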